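/- For every rational number q, |√2 − q| ≥ 1/(3·(den q)²), where den q is the denominator of q in lowest terms. -/

import Mathlib

/-!
Write `q = p / d` in lowest terms. Since `2` is not the square of a rational, `2 d² - p²` is a
nonzero integer, so `|√2 - q| · |√2 + q| = |2 - q²| ≥ 1 / d²`. If `q` is within `1/12` of `√2`
then `|√2 + q| ≤ 3`, which gives the bound; otherwise it holds trivially as soon as `d ≥ 2`.
Integers (`d = 1`) are at distance at least `√2 - 1 > 1/3` from `√2`.
-/

theorem Rat.inv_den_sq_le_abs_intCast_sub_sq {m : ℤ} (hm : ¬IsSquare (m : ℚ)) (q : ℚ) :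
    1 / (q.den : ℚ) ^ 2 ≤ |m - q ^ 2| := by
  have hd : (0 : ℚ) < (q.den : ℚ) ^ 2 := by positivity
  have hnum : m * (q.den : ℤ) ^ 2 - q.num ^ 2 ≠ 0 := by
    intro h
    refine hm ⟨q, ?_⟩
    rw [← q.num_div_den, div_mul_div_comm, ← sq, ← sq, eq_div_iff hd.ne']
    exact_mod_cast (sub_eq_zero.mp h)
  have hrep : (m : ℚ) - q ^ 2 = ((m * (q.den : ℤ) ^ 2 - q.num ^ 2 : ℤ) : ℚ) / (q.den : ℚ) ^ 2 := by
    rw [eq_div_iff hd.ne']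
    nth_rw 1 [← q.num_div_den]
    push_cast
    field_simp
  rw [hrep, abs_div, abs_of_pos hd]
  gcongr
  exact_mod_cast Int.one_le_abs hnum

theorem div_le_abs_sub_of_le_abs_sq_sub {K : Type*} [Field K] [LinearOrder K]
    [IsStrictOrderedRing K] {x y c M : K} (hM : 0 < M) (hc : c ≤ |x ^ 2 - y ^ 2|) (hxy : |x + y| ≤ M) :
    c / M ≤ |x - y| := by
  rw [div_le_iff₀ hM]
  calc c ≤ |x ^ 2 - y ^ 2| := hc
    _ = |x - y| * |x + y| := by rw [← abs_mul, sq_sub_sq, mul_comm]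
    _ ≤ |x - y| * M := mul_le_mul_of_nonneg_left hxy (abs_nonneg _)

theorem Real.seven_fifths_lt_sqrt_two : 7 / 5 < √2 := by
  rw [Real.lt_sqrt (by norm_num)]; norm_num

theorem Real.sqrt_two_lt_seventeen_twelfths : √2 < 17 / 12 := by
  rw [Real.sqrt_lt' (by norm_num)]; norm_num

theorem Real.one_third_le_abs_sqrt_two_sub_intCast (n : ℤ) : 1 / 3 ≤ |√2 - n| := by
  have h₁ := Real.seven_fifths_lt_sqrt_two
  have h₂ := Real.sqrt_two_lt_seventeen_twelfths
  rcases le_or_gt n 1 with hn | hn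
  · have hn' : (n : ℝ) ≤ 1 := by exact_mod_cast hn
    exact le_abs.mpr (Or.inl (by linarith))
  · have hn' : (2 : ℝ) ≤ n := by exact_mod_cast hn
    exact le_abs.mpr (Or.inr (by linarith))

theorem stmt_2 (q : ℚ) : |Real.sqrt 2 - (q : ℝ)| ≥ 1 / (3 * (q.den : ℝ) ^ 2) := by
  rcases (show 1 ≤ q.den from q.den_pos).eq_or_lt with hden | hden
  · rw [← hden, ← Rat.coe_int_num_of_den_eq_one hden.symm]
    simpa using Real.one_third_le_abs_sqrt_two_sub_intCast q.num
  have hd : (4 : ℝ) ≤ (q.den : ℝ) ^ 2 := by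
    have h2 : (2 : ℝ) ≤ q.den := by exact_mod_cast hden
    nlinarith
  rcases le_or_gt (1 / 12) |√2 - q| with hfar | hnear
  · refine le_trans ?_ hfar
    rw [div_le_div_iff₀ (by positivity) (by norm_num)]
    linarith
  have hsum : |√2 + q| ≤ 3 := by
    obtain ⟨hlo, hhi⟩ := abs_lt.mp hnear
    have h₁ := Real.seven_fifths_lt_sqrt_two
    have h₂ := Real.sqrt_two_lt_seventeen_twelfths
    exact abs_le.mpr ⟨by linarith, by linarith⟩
  have hsq : 1 / (q.den : ℝ) ^ 2 ≤ |√2 ^ 2 - (q : ℝ) ^ 2| := by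
    rw [Real.sq_sqrt zero_le_two]
    have h := Rat.inv_den_sq_le_abs_intCast_sub_sq (m := 2) (by norm_num) q
    simpa using (Rat.cast_le (K := ℝ)).mpr h
  calc 1 / (3 * (q.den : ℝ) ^ 2) = 1 / (q.den : ℝ) ^ 2 / 3 := by ring
    _ ≤ |√2 - q| := div_le_abs_sub_of_le_abs_sq_sub three_pos hsq hsum
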